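/- Let a₁, a₂ ∈ ℝ, 0 < α₁ < α₂, κ₁ ≥ 0, and let κ₂ > 0 satisfy κ₂ < 4α₁ and (α₁ − σα₂) + κ₂σ(2σδ + 1) < 0, where σ = (α₁+α₂)/(2α₂) and δ = κ₂/(8α₁). Set C₂ = 1 and define φ₂(x,y) = C₂(|x|^{2δ} + |y|^{2δ})/|y|^{2σδ} on U₂ = {(x,y) : x < −2 and |x|^{−1/2} < |y| < 2}. Then φ₂ is a Lyapunov function for L on U₂; in particular there exists D₂ > 0 with (Lφ₂)(x,y) ≤ δ((α₁ − σα₂) + κ₂σ(2σδ + 1))·φ₂(x,y) + D₂ for all (x,y) ∈ U₂. -/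

import Mathlib

/-!
For `y ≠ 0`, `φ₂ = |x|^{2δ} |y|^{-2σδ} + |y|^{2δ-2σδ}` is a combination of powers `|t|^p`, whose
derivatives are `p |t|^p / t` and `p (p-1) |t|^p / t²`, so `Lφ₂` is an explicit expression.
On `U₂` (where `x < 0`) the drift terms `-α₁x²` and `-α₂xy` give the leading term
`2δ(α₁ - σα₂) |x| G` with `G = |x|^{2δ} |y|^{-2σδ}`, and since `|x| y² ≥ 1` there the diffusion
term `κ₂ 2σδ(2σδ+1) G / y²` is at most `κ₂ 2σδ(2σδ+1) |x| G`; together they give `2δK |x| G` with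
`K < 0` the constant of the statement. The `κ₁`-term and the other `κ₂`-term are nonpositive
because `2δ < 1`. As `φ₂ ≤ |x| G`, half of `2δK |x| G` is at most `δK φ₂`, and the other half
absorbs the remaining terms, which grow at most like `|x|^{2δ+σδ}` and `|x|`, up to a constant.
-/

noncomputable def Lop (a₁ a₂ α₁ α₂ κ₁ κ₂ : ℝ) (Φ : ℝ × ℝ → ℝ) (p : ℝ × ℝ) : ℝ :=
  (a₁ * p.1 - α₁ * p.1 ^ 2 + p.2 ^ 2) * deriv (fun t => Φ (t, p.2)) p.1
    + (a₂ * p.2 - α₂ * p.1 * p.2) * deriv (fun t => Φ (p.1, t)) p.2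
    + κ₁ * deriv (deriv (fun t => Φ (t, p.2))) p.1
    + κ₂ * deriv (deriv (fun t => Φ (p.1, t))) p.2

/-- `φ` is a Lyapunov function for the operator `L` (with the given parameters) on `U`:
(I) `φ` is `C^∞` on `U`; (II) `φ z → ∞` as `|z| → ∞`, `z ∈ U`;
(III) there are `C, D > 0` with `Lφ ≤ -C•φ + D` on `U`. -/
def IsLyapunovOn (a₁ a₂ α₁ α₂ κ₁ κ₂ : ℝ) (φ : ℝ × ℝ → ℝ) (U : Set (ℝ × ℝ)) : Prop :=
  ContDiffOn ℝ (⊤ : ℕ∞) φ U ∧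
    (∀ M : ℝ, ∃ R : ℝ, ∀ z ∈ U, R < ‖z‖ → M < φ z) ∧
    (∃ C > (0:ℝ), ∃ D > (0:ℝ), ∀ z ∈ U, Lop a₁ a₂ α₁ α₂ κ₁ κ₂ φ z ≤ -C * φ z + D)
noncomputable def phi2 (σ δ : ℝ) (p : ℝ × ℝ) : ℝ :=
  1 * ((|p.1| ^ (2 * δ) + |p.2| ^ (2 * δ)) / |p.2| ^ (2 * σ * δ))

def U2 : Set (ℝ × ℝ) := {p : ℝ × ℝ | p.1 < -2 ∧ |p.1| ^ (-(1:ℝ)/2) < |p.2| ∧ |p.2| < 2}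

open Real Filter Topology

theorem hasDerivAt_abs_rpow_of_ne_zero (p : ℝ) {t : ℝ} (ht : t ≠ 0) :
    HasDerivAt (fun s => |s| ^ p) (p * |t| ^ p / t) t := by
  refine ((hasDerivAt_abs ht).rpow_const (p := p) (Or.inl (abs_ne_zero.2 ht))).congr_deriv ?_
  have hsplit : |t| ^ p = |t| ^ (p - 1) * |t| := by
    rw [← rpow_add_one (abs_ne_zero.2 ht), sub_add_cancel]
  rcases ht.lt_or_gt with h | h
  · rw [hsplit, abs_of_neg h, sign_neg h]; field_simp; simp
  · rw [hsplit, abs_of_pos h, sign_pos h]; field_simp; simp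

theorem hasDerivAt_abs_rpow_div (p : ℝ) {t : ℝ} (ht : t ≠ 0) :
    HasDerivAt (fun s => p * |s| ^ p / s) (p * (p - 1) * |t| ^ p / t ^ 2) t := by
  refine (((hasDerivAt_abs_rpow_of_ne_zero p ht).const_mul p).div
    (hasDerivAt_id t) ht).congr_deriv ?_
  simp only [id]
  field_simp

section AbsRpowAdd

variable (a b p q : ℝ) {t : ℝ}

theorem hasDerivAt_abs_rpow_add (ht : t ≠ 0) :
    HasDerivAt (fun s => a * |s| ^ p + b * |s| ^ q)
      ((a * p * |t| ^ p + b * q * |t| ^ q) / t) t := by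
  refine (((hasDerivAt_abs_rpow_of_ne_zero p ht).const_mul a).add
    ((hasDerivAt_abs_rpow_of_ne_zero q ht).const_mul b)).congr_deriv ?_
  ring

theorem deriv_deriv_abs_rpow_add (ht : t ≠ 0) :
    deriv (deriv fun s => a * |s| ^ p + b * |s| ^ q) t
      = (a * p * (p - 1) * |t| ^ p + b * q * (q - 1) * |t| ^ q) / t ^ 2 := by
  have hderiv : deriv (fun s => a * |s| ^ p + b * |s| ^ q)
      =ᶠ[𝓝 t] fun s => a * (p * |s| ^ p / s) + b * (q * |s| ^ q / s) := by
    filter_upwards [eventually_ne_nhds ht] with s hs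
    rw [(hasDerivAt_abs_rpow_add a b p q hs).deriv]
    ring
  rw [hderiv.deriv_eq]
  refine ((((hasDerivAt_abs_rpow_div p ht).const_mul a).add
    ((hasDerivAt_abs_rpow_div q ht).const_mul b)).congr_deriv ?_).deriv
  ring

end AbsRpowAdd

theorem phi2_eq {σ δ : ℝ} {p : ℝ × ℝ} (hy : p.2 ≠ 0) :
    phi2 σ δ p = |p.1| ^ (2 * δ) * |p.2| ^ (-(2 * σ * δ)) + |p.2| ^ (2 * δ - 2 * σ * δ) := by
  have hy' : 0 < |p.2| := abs_pos.2 hy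
  rw [phi2, one_mul, rpow_sub hy', rpow_neg hy'.le]
  ring

theorem contDiffAt_phi2 (σ δ : ℝ) {p : ℝ × ℝ} (hx : p.1 ≠ 0) (hy : p.2 ≠ 0) :
    ContDiffAt ℝ (⊤ : ℕ∞) (phi2 σ δ) p := by
  have habs : ∀ {t : ℝ}, t ≠ 0 → ∀ r : ℝ, ContDiffAt ℝ (⊤ : ℕ∞) (fun t : ℝ => |t| ^ r) t :=
    fun ht r => (contDiffAt_rpow_const_of_ne (abs_ne_zero.2 ht)).comp _ (contDiffAt_abs ht)
  exact contDiffAt_const.mul ((((habs hx _).comp p contDiffAt_fst).add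
    ((habs hy _).comp p contDiffAt_snd)).div ((habs hy _).comp p contDiffAt_snd)
    (by positivity))

theorem lop_phi2 (a₁ a₂ α₁ α₂ κ₁ κ₂ σ δ : ℝ) {p : ℝ × ℝ} (hx : p.1 ≠ 0) (hy : p.2 ≠ 0) :
    Lop a₁ a₂ α₁ α₂ κ₁ κ₂ (phi2 σ δ) p =
      2 * δ * (a₁ - α₁ * p.1 + p.2 ^ 2 / p.1) * (|p.1| ^ (2 * δ) * |p.2| ^ (-(2 * σ * δ)))
      + (a₂ - α₂ * p.1) * (-(2 * σ * δ) * (|p.1| ^ (2 * δ) * |p.2| ^ (-(2 * σ * δ)))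
          + (2 * δ - 2 * σ * δ) * |p.2| ^ (2 * δ - 2 * σ * δ))
      + κ₁ * (2 * δ * (2 * δ - 1)) * (|p.1| ^ (2 * δ) * |p.2| ^ (-(2 * σ * δ))) / p.1 ^ 2
      + κ₂ * (2 * σ * δ * (2 * σ * δ + 1) * (|p.1| ^ (2 * δ) * |p.2| ^ (-(2 * σ * δ)))
          + (2 * δ - 2 * σ * δ) * (2 * δ - 2 * σ * δ - 1) * |p.2| ^ (2 * δ - 2 * σ * δ))
          / p.2 ^ 2 := by
  -- the constant term of the `x`-slice is written as a multiple of `|t| ^ 0`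
  have hxslice : (fun t => phi2 σ δ (t, p.2)) = fun t =>
      |p.2| ^ (-(2 * σ * δ)) * |t| ^ (2 * δ) + |p.2| ^ (2 * δ - 2 * σ * δ) * |t| ^ (0 : ℝ) := by
    funext t
    rw [phi2_eq (p := (t, p.2)) hy, rpow_zero]
    ring
  have hyslice : (fun t => phi2 σ δ (p.1, t)) =ᶠ[𝓝 p.2] fun t =>
      |p.1| ^ (2 * δ) * |t| ^ (-(2 * σ * δ)) + 1 * |t| ^ (2 * δ - 2 * σ * δ) := by
    filter_upwards [eventually_ne_nhds hy] with t ht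
    rw [phi2_eq (p := (p.1, t)) ht, one_mul]
  rw [Lop, hxslice, hyslice.deriv_eq, hyslice.deriv.deriv_eq,
    (hasDerivAt_abs_rpow_add _ _ _ _ hx).deriv, deriv_deriv_abs_rpow_add _ _ _ _ hx,
    (hasDerivAt_abs_rpow_add _ _ _ _ hy).deriv, deriv_deriv_abs_rpow_add _ _ _ _ hy]
  field_simp
  ring

theorem rpow_neg_two_mul_le {x y s : ℝ} (hx : 0 < x) (hxy : x ^ (-(1:ℝ)/2) < y) (hs : 0 ≤ s) :
    y ^ (-(2 * s)) ≤ x ^ s :=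
  calc y ^ (-(2 * s)) ≤ (x ^ (-(1:ℝ)/2)) ^ (-(2 * s)) :=
        rpow_le_rpow_of_nonpos (rpow_pos_of_pos hx _) hxy.le (by linarith)
    _ = x ^ s := by rw [← rpow_mul hx.le]; ring_nf

theorem half_le_rpow_neg {y s : ℝ} (hy0 : 0 < y) (hy : y < 2) (hs0 : 0 ≤ s) (hs : s ≤ 1) :
    1 / 2 ≤ y ^ (-s) :=
  calc (1:ℝ) / 2 = 2 ^ (-1:ℝ) := by norm_num
    _ ≤ 2 ^ (-s) := rpow_le_rpow_of_exponent_le one_le_two (by linarith)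
    _ ≤ y ^ (-s) := rpow_le_rpow_of_nonpos hy0 hy.le (by linarith)

theorem rpow_le_two {y s : ℝ} (hy0 : 0 ≤ y) (hy : y ≤ 2) (hs0 : 0 ≤ s) (hs : s ≤ 1) :
    y ^ s ≤ 2 :=
  calc y ^ s ≤ 2 ^ s := rpow_le_rpow hy0 hy hs0
    _ ≤ 2 ^ (1:ℝ) := rpow_le_rpow_of_exponent_le one_le_two hs
    _ = 2 := rpow_one 2

theorem mul_sub_le_of_lt_imp {g M t B : ℝ} (hg : 0 ≤ g) (hM : 0 ≤ M) (ht : 0 ≤ t) (hB : 0 ≤ B)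
    (h : t < M → g ≤ B) : g * (M - t) ≤ B * M := by
  rcases lt_or_ge t M with htM | hMt
  · nlinarith [h htM]
  · nlinarith

theorem exists_add_sub_mul_le (c m ε μ r s : ℝ) (hε : 0 < ε) (hm : 0 ≤ m) (hμ : 0 < μ)
    (hr : 0 < r) (hs : 0 ≤ s) :
    ∃ D, ∀ X g : ℝ, 0 ≤ X → μ * X ^ r ≤ g → g ≤ X ^ s → c * g + m * X - ε * X * g ≤ D := by
  -- `ε X g / 2` dominates `|c| g` once `X ≥ 2|c|/ε`, and `m X` once `X ^ r ≥ 2m/(εμ)`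
  refine ⟨(2 * |c| / ε) ^ s * |c| + (2 * m / (ε * μ)) ^ r⁻¹ * m,
    fun X g hX hlow hup => ?_⟩
  have hg : 0 ≤ g := (mul_nonneg hμ.le (rpow_nonneg hX _)).trans hlow
  have hsmallX : g * (|c| - ε * X / 2) ≤ (2 * |c| / ε) ^ s * |c| :=
    mul_sub_le_of_lt_imp hg (abs_nonneg c) (by positivity) (by positivity) fun hX' =>
      hup.trans (rpow_le_rpow hX (by rw [le_div_iff₀ hε]; linarith) hs)
  have hsmallg : X * (m - ε * μ * X ^ r / 2) ≤ (2 * m / (ε * μ)) ^ r⁻¹ * m :=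
    mul_sub_le_of_lt_imp hX hm (by positivity) (by positivity) fun hX' =>
      ((lt_rpow_inv_iff_of_pos hX (by positivity) hr).2
        (by rw [lt_div_iff₀ (by positivity)]; linarith)).le
  have hc : c * g ≤ |c| * g := mul_le_mul_of_nonneg_right (le_abs_self c) hg
  have hlow' : ε * X * (μ * X ^ r) ≤ ε * X * g := mul_le_mul_of_nonneg_left hlow (by positivity)
  linarith

section MemU2

variable {σ δ : ℝ} {p : ℝ × ℝ}

theorem mem_U2_fst_ne_zero (hp : p ∈ U2) : p.1 ≠ 0 := by
  have := hp.1
  linarith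

theorem mem_U2_abs_snd_pos (hp : p ∈ U2) : 0 < |p.2| :=
  (rpow_pos_of_pos (abs_pos.2 (mem_U2_fst_ne_zero hp)) _).trans hp.2.1

theorem one_le_abs_fst_mul_sq_of_mem_U2 (hp : p ∈ U2) : 1 ≤ |p.1| * p.2 ^ 2 := by
  have hy := mem_U2_abs_snd_pos hp
  have h := rpow_neg_two_mul_le (abs_pos.2 (mem_U2_fst_ne_zero hp)) hp.2.1 zero_le_one
  rw [mul_one, rpow_one, rpow_neg hy.le, inv_le_iff_one_le_mul₀ (by positivity)] at h
  rwa [rpow_two, sq_abs] at h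

theorem half_mul_le_of_mem_U2 (hσδ0 : 0 ≤ σ * δ) (hσδ1 : 2 * σ * δ ≤ 1) (hp : p ∈ U2) :
    1 / 2 * |p.1| ^ (2 * δ) ≤ |p.1| ^ (2 * δ) * |p.2| ^ (-(2 * σ * δ)) := by
  rw [mul_comm]
  exact mul_le_mul_of_nonneg_left
    (half_le_rpow_neg (mem_U2_abs_snd_pos hp) hp.2.2 (by linarith) hσδ1) (by positivity)

theorem le_rpow_of_mem_U2 (hσδ0 : 0 ≤ σ * δ) (hp : p ∈ U2) :
    |p.1| ^ (2 * δ) * |p.2| ^ (-(2 * σ * δ)) ≤ |p.1| ^ (2 * δ + σ * δ) := by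
  have hx := abs_pos.2 (mem_U2_fst_ne_zero hp)
  rw [rpow_add hx, mul_assoc 2 σ δ]
  exact mul_le_mul_of_nonneg_left (rpow_neg_two_mul_le hx hp.2.1 hσδ0) (by positivity)

theorem phi2_le_of_mem_U2 (hδ : 0 ≤ δ) (hp : p ∈ U2) :
    phi2 σ δ p ≤ |p.1| * (|p.1| ^ (2 * δ) * |p.2| ^ (-(2 * σ * δ))) := by
  have hy := mem_U2_abs_snd_pos hp
  have hX : 2 < |p.1| := by rw [abs_of_neg (by linarith [hp.1])]; linarith [hp.1]
  have hW : |p.2| ^ (2 * δ - 2 * σ * δ) ≤ |p.1| ^ (2 * δ) * |p.2| ^ (-(2 * σ * δ)) := by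
    rw [sub_eq_add_neg, rpow_add hy]
    exact mul_le_mul_of_nonneg_right
      (rpow_le_rpow hy.le (hp.2.2.trans hX).le (by positivity)) (by positivity)
  have hG : 0 ≤ |p.1| ^ (2 * δ) * |p.2| ^ (-(2 * σ * δ)) := by positivity
  rw [phi2_eq (abs_pos.1 hy)]
  nlinarith

end MemU2

theorem contDiffOn_phi2 (σ δ : ℝ) : ContDiffOn ℝ (⊤ : ℕ∞) (phi2 σ δ) U2 := fun _ hp =>
  (contDiffAt_phi2 σ δ (mem_U2_fst_ne_zero hp)
    (abs_pos.1 (mem_U2_abs_snd_pos hp))).contDiffWithinAt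

theorem exists_lt_phi2 {σ δ : ℝ} (hδ : 0 < δ) (hσδ0 : 0 ≤ σ * δ) (hσδ1 : 2 * σ * δ ≤ 1)
    (M : ℝ) : ∃ R : ℝ, ∀ z ∈ U2, R < ‖z‖ → M < phi2 σ δ z := by
  obtain ⟨R, hR⟩ := eventually_atTop.1
    ((tendsto_rpow_atTop (by positivity : 0 < 2 * δ)).eventually_gt_atTop (2 * M))
  refine ⟨max R 2, fun z hz hzR => ?_⟩
  have hRz : R ≤ |z.1| := by
    rw [Prod.norm_def, Real.norm_eq_abs, Real.norm_eq_abs, lt_max_iff] at hzR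
    rcases hzR with h | h
    · exact (le_max_left R 2).trans h.le
    · linarith [le_max_right R 2, hz.2.2]
  have hW : 0 ≤ |z.2| ^ (2 * δ - 2 * σ * δ) := by positivity
  rw [phi2_eq (abs_pos.1 (mem_U2_abs_snd_pos hz))]
  linarith [hR _ hRz, half_mul_le_of_mem_U2 hσδ0 hσδ1 hz]

section Drift

variable {a₁ a₂ α₁ α₂ κ₁ κ₂ σ δ : ℝ}

theorem lop_phi2_le (hδ : 0 ≤ δ) (hδ1 : 2 * δ ≤ 1) (hσ0 : 0 ≤ σ) (hσ1 : σ ≤ 1)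
    (hκ₁ : 0 ≤ κ₁) (hκ₂ : 0 ≤ κ₂) (hα₂ : 0 ≤ α₂) {p : ℝ × ℝ} (hp : p ∈ U2) :
    Lop a₁ a₂ α₁ α₂ κ₁ κ₂ (phi2 σ δ) p
      ≤ 2 * δ * ((α₁ - σ * α₂) + κ₂ * σ * (2 * σ * δ + 1)) * |p.1|
          * (|p.1| ^ (2 * δ) * |p.2| ^ (-(2 * σ * δ)))
        + (2 * δ * a₁ - 2 * σ * δ * a₂) * (|p.1| ^ (2 * δ) * |p.2| ^ (-(2 * σ * δ)))
        + 2 * |a₂| + 2 * α₂ * |p.1| := by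
  have hx := mem_U2_fst_ne_zero hp
  have hy := mem_U2_abs_snd_pos hp
  have hxy := one_le_abs_fst_mul_sq_of_mem_U2 hp
  have hp1 : p.1 = -|p.1| := by rw [abs_of_neg (by linarith [hp.1]), neg_neg]
  have hσδ : σ * δ ≤ δ := by nlinarith
  have hσδ0 : 0 ≤ σ * δ := by positivity
  have hW2 : |p.2| ^ (2 * δ - 2 * σ * δ) ≤ 2 :=
    rpow_le_two hy.le hp.2.2.le (by linarith) (by linarith)
  rw [lop_phi2 a₁ a₂ α₁ α₂ κ₁ κ₂ σ δ hx (abs_pos.1 hy)]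
  set X := |p.1|
  set G := |p.1| ^ (2 * δ) * |p.2| ^ (-(2 * σ * δ))
  set W := |p.2| ^ (2 * δ - 2 * σ * δ)
  have hG0 : 0 ≤ G := by positivity
  have hW0 : 0 ≤ W := by positivity
  rw [hp1]
  have hdriftx : 2 * δ * (p.2 ^ 2 / -X) * G ≤ 0 :=
    mul_nonpos_of_nonpos_of_nonneg (mul_nonpos_of_nonneg_of_nonpos (by positivity)
      (div_nonpos_of_nonneg_of_nonpos (sq_nonneg _) (neg_nonpos.2 (abs_nonneg _)))) hG0
  have hdrifty : (a₂ - α₂ * -X) * ((2 * δ - 2 * σ * δ) * W) ≤ 2 * (|a₂| + α₂ * X) := by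
    have hcW : 0 ≤ (2 * δ - 2 * σ * δ) * W := mul_nonneg (by linarith) hW0
    have hcW2 : (2 * δ - 2 * σ * δ) * W ≤ 2 := by nlinarith
    nlinarith [mul_le_mul_of_nonneg_right (le_abs_self a₂) hcW,
      mul_le_mul_of_nonneg_left hcW2 (by positivity : 0 ≤ |a₂| + α₂ * X)]
  have hκ₁term : κ₁ * (2 * δ * (2 * δ - 1)) * G / (-X) ^ 2 ≤ 0 :=
    div_nonpos_of_nonpos_of_nonneg (mul_nonpos_of_nonpos_of_nonneg
      (mul_nonpos_of_nonneg_of_nonpos hκ₁ (by nlinarith)) hG0) (sq_nonneg _)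
  have hκ₂term : κ₂ * (2 * σ * δ * (2 * σ * δ + 1) * G
      + (2 * δ - 2 * σ * δ) * (2 * δ - 2 * σ * δ - 1) * W) / p.2 ^ 2
      ≤ κ₂ * (2 * σ * δ * (2 * σ * δ + 1)) * G * X := by
    rw [div_le_iff₀ (sq_abs p.2 ▸ pow_pos hy 2)]
    have hA : 0 ≤ κ₂ * (2 * σ * δ * (2 * σ * δ + 1)) * G := by positivity
    have hB : κ₂ * ((2 * δ - 2 * σ * δ) * (2 * δ - 2 * σ * δ - 1) * W) ≤ 0 :=
      mul_nonpos_of_nonneg_of_nonpos hκ₂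
        (mul_nonpos_of_nonpos_of_nonneg (by nlinarith) hW0)
    nlinarith [mul_le_mul_of_nonneg_left hxy hA]
  linarith

theorem exists_lop_phi2_le (hδ : 0 < δ) (hδ1 : 2 * δ ≤ 1)
    (hσ0 : 0 ≤ σ) (hσ1 : σ ≤ 1) (hκ₁ : 0 ≤ κ₁) (hκ₂ : 0 ≤ κ₂) (hα₂ : 0 ≤ α₂)
    (hK : (α₁ - σ * α₂) + κ₂ * σ * (2 * σ * δ + 1) < 0) :
    ∃ D > (0:ℝ), ∀ p ∈ U2, Lop a₁ a₂ α₁ α₂ κ₁ κ₂ (phi2 σ δ) p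
      ≤ δ * ((α₁ - σ * α₂) + κ₂ * σ * (2 * σ * δ + 1)) * phi2 σ δ p + D := by
  have hδK : δ * ((α₁ - σ * α₂) + κ₂ * σ * (2 * σ * δ + 1)) < 0 := mul_neg_of_pos_of_neg hδ hK
  have hσδ0 : 0 ≤ σ * δ := by positivity
  have hσδ1 : 2 * σ * δ ≤ 1 := by nlinarith
  obtain ⟨D, hD⟩ := exists_add_sub_mul_le (2 * δ * a₁ - 2 * σ * δ * a₂) (2 * α₂)
    (-(δ * ((α₁ - σ * α₂) + κ₂ * σ * (2 * σ * δ + 1))))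
    (1 / 2) (2 * δ) (2 * δ + σ * δ) (by linarith) (by positivity) (by norm_num)
    (by positivity) (by positivity)
  refine ⟨max D 0 + 2 * |a₂| + 1, by positivity, fun p hp => ?_⟩
  have hlop := lop_phi2_le (a₁ := a₁) (a₂ := a₂) (α₁ := α₁) hδ.le hδ1 hσ0 hσ1 hκ₁ hκ₂ hα₂ hp
  have habsorb := hD |p.1| _ (abs_nonneg _) (half_mul_le_of_mem_U2 hσδ0 hσδ1 hp)
    (le_rpow_of_mem_U2 hσδ0 hp)
  have hphi := mul_le_mul_of_nonpos_left (phi2_le_of_mem_U2 (σ := σ) hδ.le hp) hδK.le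
  linarith [le_max_left D 0]

end Drift

/-- `φ₂` is a Lyapunov function on `U₂` (with `C₂ = 1`). -/
theorem statement3 (a₁ a₂ α₁ α₂ κ₁ κ₂ σ δ : ℝ)
    (hα₁ : 0 < α₁) (hα : α₁ < α₂) (hκ₁ : 0 ≤ κ₁) (hκ₂ : 0 < κ₂) (hκ₂' : κ₂ < 4 * α₁)
    (hσ : σ = (α₁ + α₂) / (2 * α₂)) (hδ : δ = κ₂ / (8 * α₁))
    (hneg : (α₁ - σ * α₂) + κ₂ * σ * (2 * σ * δ + 1) < 0) :
    IsLyapunovOn a₁ a₂ α₁ α₂ κ₁ κ₂ (phi2 σ δ) U2 ∧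
      ∃ D₂ > (0:ℝ), ∀ p ∈ U2,
        Lop a₁ a₂ α₁ α₂ κ₁ κ₂ (phi2 σ δ) p
          ≤ δ * ((α₁ - σ * α₂) + κ₂ * σ * (2 * σ * δ + 1)) * phi2 σ δ p + D₂ := by
  have hα₂ : 0 < α₂ := hα₁.trans hα
  have hσ0 : 0 < σ := by rw [hσ]; positivity
  have hσ1 : σ < 1 := by rw [hσ, div_lt_one (by positivity)]; linarith
  have hδ0 : 0 < δ := by rw [hδ]; positivity
  have hδ1 : 2 * δ < 1 := by
    rw [hδ, mul_div_assoc', div_lt_one (by positivity)]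
    linarith
  have hσδ1 : 2 * σ * δ ≤ 1 := by nlinarith
  obtain ⟨D, hD, hdrift⟩ := exists_lop_phi2_le (a₁ := a₁) (a₂ := a₂) hδ0 hδ1.le hσ0.le
    hσ1.le hκ₁ hκ₂.le hα₂.le hneg
  refine ⟨⟨contDiffOn_phi2 σ δ, exists_lt_phi2 hδ0 (by positivity) hσδ1,
    -(δ * ((α₁ - σ * α₂) + κ₂ * σ * (2 * σ * δ + 1))), ?_, D, hD, ?_⟩, D, hD, hdrift⟩
  · linarith [mul_neg_of_pos_of_neg hδ0 hneg]
  · intro z hz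
    linarith [hdrift z hz]
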